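/- Let X be a T₀ space, F a nonempty finite subset, and x ∈ X. Then F ≪_{I₂} x if and only if for every net (x_i) that GSI₂-converges to x and every open set U with F ⊆ U, x_i ∈ U eventually. -/
import Mathlib


open Set

/-- Specialization order: `x ≤ y` iff `x ∈ cl {y}`. -/
def specLE {X : Type} [TopologicalSpace X] (x y : X) : Prop := x ∈ closure {y}

/-- Upward closure w.r.t. the specialization order. -/
def upClosure {X : Type} [TopologicalSpace X] (A : Set X) : Set X :=
  {y | ∃ a ∈ A, specLE a y}

/-- The underlying set of the Smyth power space: nonempty compact saturated subsets. -/
def SmythPS (X : Type) [TopologicalSpace X] : Type :=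
  {K : Set X // K.Nonempty ∧ IsCompact K ∧ ∀ x ∈ K, ∀ y, specLE x y → y ∈ K}

/-- `□U = {K ∈ Q(X) : K ⊆ U}`. -/
def boxU {X : Type} [TopologicalSpace X] (U : Set X) : Set (SmythPS X) :=
  {K : SmythPS X | K.1 ⊆ U}

/-- The upper Vietoris topology on the Smyth power space. -/
instance smythTop (X : Type) [TopologicalSpace X] : TopologicalSpace (SmythPS X) :=
  TopologicalSpace.generateFrom {S : Set (SmythPS X) | ∃ U : Set X, IsOpen U ∧ S = boxU U}

/-- The cut `A^δ = (A^↑)^↓` w.r.t. the specialization order. -/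
def cutD {X : Type} [TopologicalSpace X] (A : Set X) : Set X :=
  {x | ∀ u : X, (∀ a ∈ A, specLE a u) → specLE x u}

/-- `U` is SI₂-open. -/
def SI2Open {X : Type} [TopologicalSpace X] (U : Set X) : Prop :=
  IsOpen U ∧ ∀ F : Set X, IsIrreducible F → (cutD F ∩ U).Nonempty → (F ∩ U).Nonempty

/-- `le` makes `I` the index of a net: nonempty, reflexive, transitive, directed. -/
def IsNetOrder {I : Type} (le : I → I → Prop) : Prop :=
  Nonempty I ∧ (∀ i, le i i) ∧ (∀ i j k, le i j → le j k → le i k) ∧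
    (∀ i j, ∃ k, le i k ∧ le j k)

/-- GSI₂-convergence of the net `xi` (indexed by `(I, le)`) to `x`. -/
def GSI2Conv {X : Type} [TopologicalSpace X] {I : Type} (le : I → I → Prop)
    (xi : I → X) (x : X) : Prop :=
  ∃ 𝒢 : Set (Set X), (∀ G ∈ 𝒢, G.Finite ∧ G.Nonempty) ∧
    IsIrreducible {K : SmythPS X | ∃ G ∈ 𝒢, K.1 = upClosure G} ∧
    (∀ U : Set X, IsOpen U → (∃ G ∈ 𝒢, upClosure G ⊆ U) →
      ∃ i₀, ∀ i, le i₀ i → xi i ∈ U) ∧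
    (⋂ G ∈ 𝒢, upClosure G) ⊆ upClosure {x}

/-- `A ≪_{I₂} B`. -/
def WayBelowI2 {X : Type} [TopologicalSpace X] (A B : Set X) : Prop :=
  ∀ D : Set X, IsIrreducible D → (cutD D ∩ B).Nonempty → (A ∩ closure D).Nonempty

/-- `w(x) = {↑F : F nonempty finite, F ≪_{I₂} x}` as a subset of the Smyth power space. -/
def wPS {X : Type} [TopologicalSpace X] (x : X) : Set (SmythPS X) :=
  {K : SmythPS X | ∃ F : Set X, F.Finite ∧ F.Nonempty ∧ WayBelowI2 F {x} ∧ K.1 = upClosure F}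

/-- QI₂-continuity. -/
def QI2Continuous (X : Type) [TopologicalSpace X] : Prop :=
  ∀ x : X, IsIrreducible (wPS x) ∧ upClosure {x} = ⋂ K ∈ wPS x, (K.1 : Set X)

/-- Strong QI₂-continuity. -/
def StronglyQI2Continuous (X : Type) [TopologicalSpace X] : Prop :=
  QI2Continuous X ∧
  ∀ (F : Set X) (x : X) (U : Set X), F.Finite → F.Nonempty → WayBelowI2 F {x} →
    IsOpen U → F ⊆ U → ∃ W : Set X, SI2Open W ∧ x ∈ W ∧ W ⊆ U

section Helpers
variable {X : Type} [TopologicalSpace X]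

lemma specLE_refl (a : X) : specLE a a := subset_closure rfl

lemma specLE_trans {a b c : X} (h1 : specLE a b) (h2 : specLE b c) : specLE a c :=
  (closure_minimal (Set.singleton_subset_iff.mpr h2) isClosed_closure) h1

lemma mem_open_of_specLE {U : Set X} (hU : IsOpen U) {a y : X} (ha : a ∈ U)
    (h : specLE a y) : y ∈ U := by
  obtain ⟨z, hzU, hzy⟩ := mem_closure_iff.mp h U hU ha
  rwa [Set.mem_singleton_iff.mp hzy] at hzU

lemma self_mem_upClosure {G : Set X} {g : X} (hg : g ∈ G) : g ∈ upClosure G :=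
  ⟨g, hg, specLE_refl g⟩

lemma upClosure_upper {G : Set X} {y z : X} (hy : y ∈ upClosure G) (hyz : specLE y z) :
    z ∈ upClosure G := by
  obtain ⟨a, haG, hay⟩ := hy
  exact ⟨a, haG, specLE_trans hay hyz⟩

lemma mem_upClosure_singleton {g y : X} : y ∈ upClosure {g} ↔ specLE g y := by
  constructor
  · rintro ⟨a, ha, h⟩; rwa [Set.mem_singleton_iff.mp ha] at h
  · intro h; exact ⟨g, rfl, h⟩

lemma upClosure_subset_open {G U : Set X} (hU : IsOpen U) (hGU : G ⊆ U) :
    upClosure G ⊆ U := by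
  rintro y ⟨a, haG, hay⟩
  exact mem_open_of_specLE hU (hGU haG) hay

lemma isCompact_upClosure {G : Set X} (hfin : G.Finite) : IsCompact (upClosure G) := by
  have he : upClosure G = ⋃ g ∈ G, upClosure {g} := by
    ext y
    simp only [mem_iUnion, mem_upClosure_singleton]
    exact ⟨fun ⟨a, ha, h⟩ => ⟨a, ha, h⟩, fun ⟨a, ha, h⟩ => ⟨a, ha, h⟩⟩
  rw [he]
  refine hfin.isCompact_biUnion fun g _ => ?_
  apply isCompact_of_finite_subcover
  intro ι Uo hUo hcov
  obtain ⟨i, hi⟩ := mem_iUnion.mp (hcov (self_mem_upClosure rfl))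
  refine ⟨{i}, fun y hy => ?_⟩
  have : y ∈ Uo i := mem_open_of_specLE (hUo i) hi (mem_upClosure_singleton.mp hy)
  simp [this]

lemma isOpen_boxU {U : Set X} (hU : IsOpen U) : IsOpen (boxU U) :=
  TopologicalSpace.isOpen_generateFrom_of_mem ⟨U, hU, rfl⟩

def etaPS (x : X) : SmythPS X :=
  ⟨upClosure {x}, ⟨x, self_mem_upClosure rfl⟩, isCompact_upClosure (finite_singleton x),
    fun _ ha y h => upClosure_upper ha h⟩

lemma continuous_etaPS : Continuous (etaPS : X → SmythPS X) := by
  rw [show (smythTop X) = TopologicalSpace.generateFrom _ from rfl,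
    continuous_generateFrom_iff]
  rintro S ⟨U, hU, rfl⟩
  have : etaPS ⁻¹' boxU U = U := by
    ext d
    constructor
    · intro h; exact h (self_mem_upClosure rfl)
    · intro hd; exact upClosure_subset_open hU (Set.singleton_subset_iff.mpr hd)
  rw [this]; exact hU

lemma chain_finset_lb {c : Set (Set X)} (hc : IsChain (· ⊆ ·) c) (hne : c.Nonempty)
    (u : Finset (Set X)) (hu : ↑u ⊆ c) : ∃ A ∈ c, ∀ B ∈ u, A ⊆ B := by
  classical
  induction u using Finset.induction with
  | empty => exact ⟨hne.some, hne.some_mem, by simp⟩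
  | @insert B u' hB ih =>
    obtain ⟨A, hAc, hA⟩ := ih (by intro y hy; exact hu (by simp [hy]))
    have hBc : B ∈ c := hu (by simp)
    rcases eq_or_ne A B with h | h
    · exact ⟨A, hAc, fun C hC => by
        rcases Finset.mem_insert.mp hC with h' | h'
        · rw [h', ← h]
        · exact hA C h'⟩
    rcases hc hAc hBc h with h' | h'
    · exact ⟨A, hAc, fun C hC => by
        rcases Finset.mem_insert.mp hC with hc' | hc'
        · rw [hc']; exact h'
        · exact hA C hc'⟩
    · exact ⟨B, hBc, fun C hC => by
        rcases Finset.mem_insert.mp hC with hc' | hc'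
        · rw [hc']
        · exact h'.trans (hA C hc')⟩

end Helpers

theorem stmt16 {X : Type} [TopologicalSpace X] [T0Space X] (F : Set X)
    (hfin : F.Finite) (hne : F.Nonempty) (x : X) :
    WayBelowI2 F {x} ↔
      ∀ (I : Type) (le : I → I → Prop) (xi : I → X), IsNetOrder le →
        GSI2Conv le xi x → ∀ U : Set X, IsOpen U → F ⊆ U →
          ∃ i₀, ∀ i, le i₀ i → xi i ∈ U := by
  constructor
  · -- forward
    rintro h I le xi hnet ⟨𝒢, h𝒢, hirr, hconv, hcap⟩ U hU hFU
    refine hconv U hU ?_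
    by_contra hno
    push_neg at hno
    -- every upClosure G meets Uᶜ
    have hmeet : ∀ G ∈ 𝒢, (Uᶜ ∩ upClosure G).Nonempty := by
      intro G hG
      obtain ⟨y, hyG, hyU⟩ := Set.not_subset.mp (hno G hG)
      exact ⟨y, hyU, hyG⟩
    set 𝒮 : Set (Set X) :=
      {A | IsClosed A ∧ A ⊆ Uᶜ ∧ ∀ G ∈ 𝒢, (A ∩ upClosure G).Nonempty} with h𝒮
    have hUc : Uᶜ ∈ 𝒮 := ⟨hU.isClosed_compl, Set.Subset.rfl, fun G hG => hmeet G hG⟩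
    have hchaincond : ∀ c ⊆ 𝒮, IsChain (· ⊆ ·) c → c.Nonempty →
        ∃ lb ∈ 𝒮, ∀ s ∈ c, lb ⊆ s := by
      intro c hc𝒮 hchain hcne
      classical
      refine ⟨⋂₀ c, ⟨isClosed_sInter fun A hA => (hc𝒮 hA).1,
        (Set.sInter_subset_of_mem hcne.some_mem).trans (hc𝒮 hcne.some_mem).2.1, ?_⟩,
        fun s hs => Set.sInter_subset_of_mem hs⟩
      intro G hG
      have hcomp : IsCompact (upClosure G) := isCompact_upClosure (h𝒢 G hG).1
      have := hcomp.inter_iInter_nonempty (fun A : c => (A : Set X))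
        (fun A => (hc𝒮 A.2).1) ?_
      · obtain ⟨y, hyG, hy⟩ := this
        refine ⟨y, ?_, hyG⟩
        intro B hB
        exact mem_iInter.mp hy ⟨B, hB⟩
      · intro u
        obtain ⟨B, hBc, hB⟩ := chain_finset_lb hchain hcne (u.image (fun A : c => (A : Set X)))
          (by intro y hy; simp only [Finset.coe_image, Set.mem_image] at hy
              obtain ⟨A, _, rfl⟩ := hy; exact A.2)
        obtain ⟨y, hyB, hyG⟩ := (hc𝒮 hBc).2.2 G hG
        refine ⟨y, hyG, ?_⟩
        simp only [mem_iInter]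
        intro A hA
        exact hB A (Finset.mem_image_of_mem _ hA) hyB
    obtain ⟨A, -, hAmin⟩ := zorn_superset_nonempty 𝒮 hchaincond Uᶜ hUc
    obtain ⟨hAcl, hAUc, hAmeets⟩ := hAmin.1
    -- A is irreducible
    have hAne : A.Nonempty := by
      obtain ⟨K, G, hG, -⟩ := hirr.1
      obtain ⟨y, hy, -⟩ := hAmeets G hG
      exact ⟨y, hy⟩
    have hAirr : IsIrreducible A := by
      refine ⟨hAne, fun V₁ V₂ hV₁ hV₂ ⟨z₁, hz₁A, hz₁V⟩ ⟨z₂, hz₂A, hz₂V⟩ => ?_⟩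
      by_contra hemp
      have key : ∀ (V : Set X) (z : X), IsOpen V → z ∈ A → z ∈ V →
          ∃ G ∈ 𝒢, upClosure G ⊆ (A \ V)ᶜ := by
        intro V z hV hzA hzV
        have hAV : A \ V ∉ 𝒮 := by
          intro hmem
          have := hAmin.2 hmem (Set.diff_subset)
          exact (this hzA).2 hzV
        simp only [h𝒮, Set.mem_setOf_eq, not_and] at hAV
        have h1 : IsClosed (A \ V) := hAcl.sdiff hV
        have h2 : A \ V ⊆ Uᶜ := Set.diff_subset.trans hAUc
        push_neg at hAV
        obtain ⟨G, hG, hGe⟩ := hAV h1 h2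
        refine ⟨G, hG, fun y hy hyAV => ?_⟩
        exact (Set.not_nonempty_iff_eq_empty.mpr hGe) ⟨y, hyAV, hy⟩
      obtain ⟨G₁, hG₁, hG₁W⟩ := key V₁ z₁ hV₁ hz₁A hz₁V
      obtain ⟨G₂, hG₂, hG₂W⟩ := key V₂ z₂ hV₂ hz₂A hz₂V
      have hW₁ : IsOpen (A \ V₁)ᶜ := (hAcl.sdiff hV₁).isOpen_compl
      have hW₂ : IsOpen (A \ V₂)ᶜ := (hAcl.sdiff hV₂).isOpen_compl
      set K₁ : SmythPS X := ⟨upClosure G₁, ⟨(h𝒢 G₁ hG₁).2.some,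
        self_mem_upClosure (h𝒢 G₁ hG₁).2.some_mem⟩, isCompact_upClosure (h𝒢 G₁ hG₁).1,
        fun _ ha y hy => upClosure_upper ha hy⟩
      set K₂ : SmythPS X := ⟨upClosure G₂, ⟨(h𝒢 G₂ hG₂).2.some,
        self_mem_upClosure (h𝒢 G₂ hG₂).2.some_mem⟩, isCompact_upClosure (h𝒢 G₂ hG₂).1,
        fun _ ha y hy => upClosure_upper ha hy⟩
      have := hirr.2 (boxU (A \ V₁)ᶜ) (boxU (A \ V₂)ᶜ) (isOpen_boxU hW₁) (isOpen_boxU hW₂)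
        ⟨K₁, ⟨G₁, hG₁, rfl⟩, hG₁W⟩ ⟨K₂, ⟨G₂, hG₂, rfl⟩, hG₂W⟩
      obtain ⟨K, ⟨G, hG, hKG⟩, hK₁, hK₂⟩ := this
      obtain ⟨a, haA, haG⟩ := hAmeets G hG
      have haK : a ∈ K.1 := by rw [hKG]; exact haG
      have ha₁ : a ∈ V₁ := by
        have := hK₁ haK
        simp only [Set.mem_compl_iff, Set.mem_diff, not_and, not_not] at this
        exact this haA
      have ha₂ : a ∈ V₂ := by
        have := hK₂ haK
        simp only [Set.mem_compl_iff, Set.mem_diff, not_and, not_not] at this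
        exact this haA
      exact hemp ⟨a, haA, ha₁, ha₂⟩
    -- x ∈ cutD A
    have hxcut : x ∈ cutD A := by
      intro u hu
      have : u ∈ ⋂ G ∈ 𝒢, upClosure G := by
        simp only [mem_iInter]
        intro G hG
        obtain ⟨a, haA, haG⟩ := hAmeets G hG
        exact upClosure_upper haG (hu a haA)
      obtain ⟨a, ha, hau⟩ := hcap this
      rwa [Set.mem_singleton_iff.mp ha] at hau
    obtain ⟨f, hfF, hfA⟩ := h A hAirr ⟨x, hxcut, rfl⟩
    rw [hAcl.closure_eq] at hfA
    exact hAUc hfA (hFU hfF)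
  · -- backward
    intro h D hD hcut
    by_contra hF
    have hFsub : F ⊆ (closure D)ᶜ := by
      intro f hf
      intro hfc
      exact hF ⟨f, hf, hfc⟩
    -- build the net
    let In : Type := {V : Set X // IsOpen V ∧ (V ∩ D).Nonempty}
    let leI : In → In → Prop := fun V W => W.1 ⊆ V.1
    let xi : In → X := fun V => V.2.2.some
    have hxi : ∀ V : In, xi V ∈ V.1 ∩ D := fun V => V.2.2.some_mem
    have hInet : IsNetOrder leI := by
      refine ⟨⟨⟨univ, isOpen_univ, by simpa using hD.1⟩⟩,
        fun i => Set.Subset.rfl, fun i j k h1 h2 => h2.trans h1, ?_⟩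
      intro i j
      have := hD.2 i.1 j.1 i.2.1 j.2.1
        (by obtain ⟨y, hy1, hy2⟩ := i.2.2; exact ⟨y, hy2, hy1⟩)
        (by obtain ⟨y, hy1, hy2⟩ := j.2.2; exact ⟨y, hy2, hy1⟩)
      obtain ⟨y, hyD, hyi, hyj⟩ := this
      exact ⟨⟨i.1 ∩ j.1, i.2.1.inter j.2.1, ⟨y, ⟨hyi, hyj⟩, hyD⟩⟩,
        Set.inter_subset_left, Set.inter_subset_right⟩
    have hconv : GSI2Conv leI xi x := by
      refine ⟨(fun d => ({d} : Set X)) '' D, ?_, ?_, ?_, ?_⟩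
      · rintro G ⟨d, -, rfl⟩
        exact ⟨finite_singleton d, singleton_nonempty d⟩
      · have heq : {K : SmythPS X | ∃ G ∈ (fun d => ({d} : Set X)) '' D, K.1 = upClosure G}
            = etaPS '' D := by
          ext K
          simp only [Set.mem_setOf_eq, Set.mem_image]
          constructor
          · rintro ⟨G, ⟨d, hd, rfl⟩, hK⟩
            exact ⟨d, hd, Subtype.ext hK.symm⟩
          · rintro ⟨d, hd, rfl⟩
            exact ⟨{d}, ⟨d, hd, rfl⟩, rfl⟩
        rw [heq]
        exact hD.image etaPS continuous_etaPS.continuousOn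
      · rintro U hU ⟨G, ⟨d, hd, rfl⟩, hGU⟩
        have hdU : d ∈ U := hGU (self_mem_upClosure rfl)
        refine ⟨⟨U, hU, ⟨d, hdU, hd⟩⟩, fun i hi => ?_⟩
        exact hi (hxi i).1
      · intro u hu
        simp only [mem_iInter] at hu
        have hall : ∀ d ∈ D, specLE d u := by
          intro d hd
          exact mem_upClosure_singleton.mp (hu {d} ⟨d, hd, rfl⟩)
        obtain ⟨z, hz, hzx⟩ := hcut
        rw [Set.mem_singleton_iff] at hzx
        subst hzx
        have hxz : specLE z u := hz u hall
        exact ⟨z, rfl, hxz⟩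
    obtain ⟨i₀, hi₀⟩ := h In leI xi hInet hconv (closure D)ᶜ
      (isClosed_closure.isOpen_compl) hFsub
    have := hi₀ i₀ (Set.Subset.rfl)
    exact this (subset_closure (hxi i₀).2)
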